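/- The signless Laplacian spectral radius of the blow-up C₅∘(n-4,1,1,1,1) is the largest root of x³ - (n+2)x² + (3n-2)x - 4 = 0. -/

import Mathlib

open SimpleGraph Matrix Finset BigOperators

/-- The signless Laplacian matrix `Q(G) = D(G) + A(G)` of a simple graph, over `ℝ`. -/
noncomputable def signlessLaplacian {V : Type*} [Fintype V] [DecidableEq V]
    (G : SimpleGraph V) : Matrix V V ℝ :=
  letI := Classical.decRel G.Adj
  G.degMatrix ℝ + G.adjMatrix ℝ

/-- The `Q`-index of a graph: the largest eigenvalue of its signless Laplacian matrix. -/
noncomputable def qIndex {V : Type*} [Fintype V] [DecidableEq V] (G : SimpleGraph V) : ℝ :=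
  sSup (spectrum ℝ (signlessLaplacian G))

/-- The blow-up `C₅ ∘ (r₁,…,r₅)` of the 5-cycle: vertex `vᵢ` of `C₅` is replaced by an
independent set of `r i` vertices, and classes of adjacent cycle vertices are fully joined. -/
def C5blowup (r : Fin 5 → ℕ) : SimpleGraph ((i : Fin 5) × Fin (r i)) where
  Adj a b := a.1 = b.1 + 1 ∨ b.1 = a.1 + 1
  symm := ⟨fun a b h => Or.symm h⟩
  loopless := ⟨fun a h => by
    have h5 : ∀ i : Fin 5, ¬ i = i + 1 := by decide
    rcases h with h | h <;> exact h5 _ h⟩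

/-- The graph `C₅ • K_{1,t}` obtained by identifying a vertex of the 5-cycle
(the vertex `Sum.inl 0`) with the center of the star `K_{1,t}`. -/
def C5star (t : ℕ) : SimpleGraph (Fin 5 ⊕ Fin t) where
  Adj a b :=
    (∃ i j : Fin 5, a = Sum.inl i ∧ b = Sum.inl j ∧ (i = j + 1 ∨ j = i + 1)) ∨
    (a = Sum.inl 0 ∧ ∃ j : Fin t, b = Sum.inr j) ∨
    (b = Sum.inl 0 ∧ ∃ j : Fin t, a = Sum.inr j)
  symm := ⟨fun a b h => by
    rcases h with ⟨i, j, hi, hj, hij⟩ | ⟨h1, j, h2⟩ | ⟨h1, j, h2⟩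
    · exact Or.inl ⟨j, i, hj, hi, Or.symm hij⟩
    · exact Or.inr (Or.inr ⟨h1, j, h2⟩)
    · exact Or.inr (Or.inl ⟨h1, j, h2⟩)⟩
  loopless := ⟨fun a h => by
    have h5 : ∀ i : Fin 5, ¬ i = i + 1 := by decide
    rcases h with ⟨i, j, hi, hj, hij⟩ | ⟨h1, j, h2⟩ | ⟨h1, j, h2⟩
    · subst hi; cases hj; rcases hij with h | h <;> exact h5 _ h
    · subst h1; simp at h2
    · subst h1; simp at h2⟩

/-- The star `K_{1,t}` with center `0` and `t` leaves. -/
def starG (t : ℕ) : SimpleGraph (Fin (t + 1)) where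
  Adj a b := a ≠ b ∧ (a = 0 ∨ b = 0)
  symm := ⟨fun a b h => ⟨h.1.symm, h.2.symm⟩⟩
  loopless := ⟨fun a h => h.1 rfl⟩

/-! Write `m = n - 4`, `d i = r (i + 1) + r (i - 1)` for the degree of the vertices of class `i`,
and `S j` for the sum of a vector `v` over class `j`; then `(Q v) a = d i * v a + S (i + 1) + S (i - 1)`
for `a` in class `i`. Vectors constant on the classes show that every root of the cubic
`x³ - (m + 6) x² + (3m + 10) x - 4` is an eigenvalue. Conversely, summing the eigenvalue equation
over each class gives a linear system for the class sums which splits into a symmetric part with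
determinant the cubic and an antisymmetric part with determinant `x² - (m + 2) x + m`. For an
eigenvalue `μ ≥ m + 2` the quadratic and all `μ - d i` are nonzero, so `μ` must be a root of the cubic.
The cubic has a root above `m + 2`, hence the largest eigenvalue is its largest root. -/

theorem Matrix.mem_spectrum_iff_exists_mulVec_eq_smul {n K : Type*} [Fintype n] [DecidableEq n]
    [Field K] (A : Matrix n n K) (μ : K) :
    μ ∈ spectrum K A ↔ ∃ v ≠ 0, A *ᵥ v = μ • v := by
  rw [← Matrix.spectrum_toLin', ← Module.End.hasEigenvalue_iff_mem_spectrum]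
  constructor
  · intro h
    obtain ⟨v, hv⟩ := h.exists_hasEigenvector
    exact ⟨v, hv.2, by simpa using hv.apply_eq_smul⟩
  · rintro ⟨v, hv0, hv⟩
    exact Module.End.hasEigenvalue_of_hasEigenvector
      ⟨by simpa [Module.End.mem_eigenspace_iff] using hv, hv0⟩

theorem SimpleGraph.signlessLaplacian_mulVec_apply {V : Type*} [Fintype V] [DecidableEq V]
    (G : SimpleGraph V) [DecidableRel G.Adj] (v : V → ℝ) (a : V) :
    (signlessLaplacian G *ᵥ v) a = G.degree a * v a + ∑ b ∈ G.neighborFinset a, v b := by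
  rw [signlessLaplacian, add_mulVec, Pi.add_apply, degMatrix_mulVec_apply, adjMatrix_mulVec_apply]
  congr!

namespace C5blowup

variable {r : Fin 5 → ℕ}

instance : DecidableRel (C5blowup r).Adj := fun _ _ => inferInstanceAs (Decidable (_ ∨ _))

def classSum {M : Type*} [AddCommMonoid M] (v : (i : Fin 5) × Fin (r i) → M) (i : Fin 5) : M :=
  ∑ k, v ⟨i, k⟩

theorem adj_iff (a b : (i : Fin 5) × Fin (r i)) :
    (C5blowup r).Adj a b ↔ b.1 = a.1 + 1 ∨ b.1 = a.1 - 1 := by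
  change a.1 = b.1 + 1 ∨ b.1 = a.1 + 1 ↔ _
  rw [eq_sub_iff_add_eq, eq_comm (a := a.1)]
  exact Or.comm

theorem sum_neighborFinset {M : Type*} [AddCommMonoid M] (v : (i : Fin 5) × Fin (r i) → M)
    (a : (i : Fin 5) × Fin (r i)) :
    ∑ b ∈ (C5blowup r).neighborFinset a, v b = classSum v (a.1 + 1) + classSum v (a.1 - 1) := by
  have hne : ∀ i : Fin 5, i + 1 ≠ i - 1 := by decide
  have hnbr : (C5blowup r).neighborFinset a =
      ({a.1 + 1, a.1 - 1} : Finset (Fin 5)).sigma fun _ => univ := by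
    ext b
    simp [adj_iff]
  rw [hnbr, Finset.sum_sigma, Finset.sum_pair (hne a.1)]
  rfl

theorem degree_eq (a : (i : Fin 5) × Fin (r i)) :
    (C5blowup r).degree a = r (a.1 + 1) + r (a.1 - 1) := by
  rw [← card_neighborFinset_eq_degree, card_eq_sum_ones, sum_neighborFinset]
  simp [classSum]

theorem signlessLaplacian_mulVec_apply (v : (i : Fin 5) × Fin (r i) → ℝ)
    (a : (i : Fin 5) × Fin (r i)) :
    (signlessLaplacian (C5blowup r) *ᵥ v) a =
      (r (a.1 + 1) + r (a.1 - 1)) * v a + classSum v (a.1 + 1) + classSum v (a.1 - 1) := by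
  rw [SimpleGraph.signlessLaplacian_mulVec_apply, sum_neighborFinset, degree_eq, add_assoc]
  push_cast
  rfl

theorem classSum_const (y : Fin 5 → ℝ) (i : Fin 5) :
    classSum (r := r) (fun b => y b.1) i = r i * y i := by
  simp [classSum]

variable {μ : ℝ} {v : (i : Fin 5) × Fin (r i) → ℝ}

theorem eigenvector_apply (hv : signlessLaplacian (C5blowup r) *ᵥ v = μ • v)
    (a : (i : Fin 5) × Fin (r i)) :
    (μ - (r (a.1 + 1) + r (a.1 - 1))) * v a = classSum v (a.1 + 1) + classSum v (a.1 - 1) := by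
  have := congrFun hv a
  rw [signlessLaplacian_mulVec_apply, Pi.smul_apply, smul_eq_mul] at this
  linarith

theorem eigenvector_classSum (hv : signlessLaplacian (C5blowup r) *ᵥ v = μ • v) (i : Fin 5) :
    (μ - (r (i + 1) + r (i - 1))) * classSum v i =
      r i * (classSum v (i + 1) + classSum v (i - 1)) := by
  rw [classSum, Finset.mul_sum, Finset.sum_congr rfl fun k _ => eigenvector_apply hv ⟨i, k⟩]
  simp [mul_add]

end C5blowup

section OneLargeClass

variable {m : ℕ}

theorem eq_zero_of_quotient_equations (hm : 0 < m) {μ : ℝ}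
    (hcubic : μ ^ 3 - (m + 6) * μ ^ 2 + (3 * m + 10) * μ - 4 ≠ 0)
    (hquad : μ ^ 2 - (m + 2) * μ + m ≠ 0) {S : Fin 5 → ℝ}
    (hS : ∀ i, (μ - (![m, 1, 1, 1, 1] (i + 1) + ![m, 1, 1, 1, 1] (i - 1) : ℝ)) * S i
      = ![m, 1, 1, 1, 1] i * (S (i + 1) + S (i - 1))) :
    S = 0 := by
  have e0 := hS 0
  have e1 := hS 1
  have e2 := hS 2
  have e3 := hS 3
  have e4 := hS 4
  simp only [Fin.reduceAdd, Fin.reduceSub, Fin.isValue, Matrix.cons_val, Nat.cast_one]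
    at e0 e1 e2 e3 e4
  have hm' : (m : ℝ) ≠ 0 := by positivity
  -- the cubic is the determinant of the system for `S 0, S 1 + S 4, S 2 + S 3`,
  -- the quadratic that of the system for `S 1 - S 4, S 2 - S 3`
  have h0 : S 0 = 0 := by
    refine (mul_eq_zero.mp ?_).resolve_left hcubic
    linear_combination ((μ - m - 1) * (μ - 3) - 1) * e0 + m * (μ - 3) * (e1 + e4) + m * (e2 + e3)
  have h23 : S 2 - S 3 = 0 := by
    refine (mul_eq_zero.mp ?_).resolve_left hquad
    linear_combination (μ - m - 1) * (e2 - e3) + (e1 - e4)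
  have h14 : S 1 + S 4 = 0 := by
    refine (mul_eq_zero.mp ?_).resolve_left hm'
    linear_combination -e0 + (μ - 2) * h0
  have h1 : S 1 = 0 := by
    linear_combination (1 / 2) * h14 + (μ - 1) / 2 * h23 - (1 / 2) * (e2 - e3)
  have h2 : S 2 = 0 := by
    linear_combination (μ - m - 1) / 2 * h14 - h0 - (1 / 2) * (e1 + e4) + (1 / 2) * h23
  funext i
  fin_cases i
  all_goals simp only [Fin.zero_eta, Fin.mk_one, Fin.reduceFinMk, Pi.zero_apply]; linarith

theorem mem_spectrum_of_cubic_eq_zero (hm : 0 < m) {μ : ℝ}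
    (hμ : μ ^ 3 - (m + 6) * μ ^ 2 + (3 * m + 10) * μ - 4 = 0) :
    μ ∈ spectrum ℝ (signlessLaplacian (C5blowup ![m, 1, 1, 1, 1])) := by
  have hμ2 : μ - 2 ≠ 0 := by
    intro h
    rw [sub_eq_zero.mp h] at hμ
    have : (m : ℝ) = 0 := by linarith
    exact hm.ne' (by exact_mod_cast this)
  -- a symmetric solution of the quotient system; the equations of classes 1 and 4 are the cubic
  let y : Fin 5 → ℝ := ![2 * (μ - 3), (μ - 3) * (μ - 2), μ - 2, μ - 2, (μ - 3) * (μ - 2)]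
  rw [Matrix.mem_spectrum_iff_exists_mulVec_eq_smul]
  refine ⟨fun b => y b.1, fun h => hμ2 (congrFun h ⟨2, ⟨0, Nat.one_pos⟩⟩), ?_⟩
  ext ⟨i, k⟩
  rw [C5blowup.signlessLaplacian_mulVec_apply, C5blowup.classSum_const, C5blowup.classSum_const]
  fin_cases i <;>
    simp only [y, Fin.zero_eta, Fin.mk_one, Fin.reduceFinMk, Fin.reduceAdd, Fin.reduceSub,
      Fin.isValue, Matrix.cons_val, Nat.cast_one, Pi.smul_apply, smul_eq_mul]
  · ring
  · linear_combination -hμ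
  · ring
  · ring
  · linear_combination -hμ

theorem cubic_eq_zero_of_mem_spectrum (hm : 0 < m) {μ : ℝ}
    (hμ : μ ∈ spectrum ℝ (signlessLaplacian (C5blowup ![m, 1, 1, 1, 1]))) (hμm : m + 2 ≤ μ) :
    μ ^ 3 - (m + 6) * μ ^ 2 + (3 * m + 10) * μ - 4 = 0 := by
  by_contra hcubic
  obtain ⟨v, hv0, hv⟩ := (Matrix.mem_spectrum_iff_exists_mulVec_eq_smul _ _).mp hμ
  have hm' : (0 : ℝ) < m := by exact_mod_cast hm
  have hquad : μ ^ 2 - (m + 2) * μ + m ≠ 0 := by nlinarith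
  have hS := eq_zero_of_quotient_equations hm hcubic hquad (C5blowup.eigenvector_classSum hv)
  have hdeg : ∀ i : Fin 5, (![m, 1, 1, 1, 1] (i + 1) + ![m, 1, 1, 1, 1] (i - 1) : ℝ) < μ := by
    intro i
    fin_cases i <;>
      simp only [Fin.zero_eta, Fin.mk_one, Fin.reduceFinMk, Fin.reduceAdd, Fin.reduceSub,
        Fin.isValue, Matrix.cons_val, Nat.cast_one] <;>
      linarith
  refine hv0 (funext fun a => ?_)
  have ha := C5blowup.eigenvector_apply hv a
  rw [hS, Pi.zero_apply, Pi.zero_apply, add_zero] at ha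
  exact (mul_eq_zero.mp ha).resolve_left (sub_ne_zero.mpr (hdeg a.1).ne')

theorem exists_cubic_root_gt (hm : 0 < m) :
    ∃ ρ : ℝ, ρ ^ 3 - (m + 6) * ρ ^ 2 + (3 * m + 10) * ρ - 4 = 0 ∧ m + 2 < ρ := by
  have hm' : (0 : ℝ) < m := by exact_mod_cast hm
  obtain ⟨ρ, hρ, hρ0⟩ := intermediate_value_Icc (show (m : ℝ) + 2 ≤ m + 6 by linarith)
    (f := fun x : ℝ => x ^ 3 - (m + 6) * x ^ 2 + (3 * m + 10) * x - 4) (by fun_prop)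
    (show (0 : ℝ) ∈ Set.Icc _ _ by constructor <;> nlinarith)
  refine ⟨ρ, hρ0, lt_of_le_of_ne hρ.1 fun h => ?_⟩
  subst h
  nlinarith

theorem isGreatest_qIndex (hm : 0 < m) :
    IsGreatest {x : ℝ | x ^ 3 - (m + 6) * x ^ 2 + (3 * m + 10) * x - 4 = 0}
      (qIndex (C5blowup ![m, 1, 1, 1, 1])) := by
  obtain ⟨ρ, hρ, hρm⟩ := exists_cubic_root_gt hm
  have hfin := Matrix.finite_spectrum (signlessLaplacian (C5blowup ![m, 1, 1, 1, 1]))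
  have hρ_mem := mem_spectrum_of_cubic_eq_zero hm hρ
  have hq_mem : qIndex (C5blowup ![m, 1, 1, 1, 1]) ∈ _ := Set.Nonempty.csSup_mem ⟨ρ, hρ_mem⟩ hfin
  have hρq : ρ ≤ qIndex (C5blowup ![m, 1, 1, 1, 1]) := le_csSup hfin.bddAbove hρ_mem
  exact ⟨cubic_eq_zero_of_mem_spectrum hm hq_mem (by linarith),
    fun x hx => le_csSup hfin.bddAbove (mem_spectrum_of_cubic_eq_zero hm hx)⟩

end OneLargeClass

/-- The `Q`-index of `C₅ ∘ (n-4,1,1,1,1)` is the largest root of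
`x³ - (n+2)x² + (3n-2)x - 4 = 0`. -/
theorem stmt5 {n : ℕ} (hn : 5 ≤ n) :
    (qIndex (C5blowup ![n - 4, 1, 1, 1, 1])) ^ 3
        - ((n : ℝ) + 2) * (qIndex (C5blowup ![n - 4, 1, 1, 1, 1])) ^ 2
        + (3 * (n : ℝ) - 2) * qIndex (C5blowup ![n - 4, 1, 1, 1, 1]) - 4 = 0 ∧
    ∀ x : ℝ, x ^ 3 - ((n : ℝ) + 2) * x ^ 2 + (3 * (n : ℝ) - 2) * x - 4 = 0 →
      x ≤ qIndex (C5blowup ![n - 4, 1, 1, 1, 1]) := by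
  obtain ⟨hroot, hmax⟩ := isGreatest_qIndex (show 0 < n - 4 by omega)
  have hcast : ((n - 4 : ℕ) : ℝ) = n - 4 := by push_cast [show 4 ≤ n by omega]; ring
  simp only [hcast, Set.mem_ofPred_eq, mem_upperBounds] at hroot hmax
  exact ⟨by linear_combination hroot, fun x hx => hmax x (by linear_combination hx)⟩
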